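/- arXiv:2203.11928 — 2 statements merged into one kernel-verified Lean document; each statement's English description precedes it below -/
import Mathlib

section
/- Let c : ℝⁿ → ℝ be C¹, radially unbounded, with a unique critical point p* which is the global maximum, and suppose c(p) − c(p*) ≥ −κ‖∇c(p)‖² for all p and some κ > 0. Let M be a constant symmetric positive definite n×n matrix. Then p* is globally asymptotically stable for the gradient-like system ṗ = M·∇c(p). -/
/-! `V = c(p*) − c` is a Lyapunov function for the flow: along a trajectory
`d/dt c(p t) = ⟪∇c, M ∇c⟫ ≥ m‖∇c‖² ≥ (m/κ) V`, with `m > 0` the minimum of `⟪M x, x⟫` on the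
unit sphere, so `V` decays exponentially. Since `c` is radially unbounded and `p*` is its only
maximiser (any other would be a critical point), `c(q) → c(p*)` forces `q → p*`; the exponential
decay then gives attractivity and the monotonicity of `c` along trajectories gives stability. -/

open Filter RealInnerProductSpace Topology Real

theorem ContinuousLinearMap.exists_pos_mul_sq_norm_le_inner_self
    {E : Type*} [NormedAddCommGroup E] [InnerProductSpace ℝ E] [FiniteDimensional ℝ E]
    (M : E →L[ℝ] E) (hM : ∀ x, x ≠ 0 → 0 < ⟪M x, x⟫) :
    ∃ m > 0, ∀ x, m * ‖x‖ ^ 2 ≤ ⟪M x, x⟫ := by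
  rcases subsingleton_or_nontrivial E with hE | hE
  · exact ⟨1, one_pos, fun x => by simp [Subsingleton.elim x 0]⟩
  obtain ⟨u, hu, hmin⟩ := (isCompact_sphere (0 : E) 1).exists_isMinOn
    (NormedSpace.sphere_nonempty.2 zero_le_one)
    (M.continuous.inner (𝕜 := ℝ) continuous_id).continuousOn
  refine ⟨⟪M u, u⟫, hM u (ne_zero_of_mem_unit_sphere ⟨u, hu⟩), fun x => ?_⟩
  rcases eq_or_ne x 0 with rfl | hx
  · simp
  have hx' : ‖x‖ ≠ 0 := norm_ne_zero_iff.2 hx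
  have hv : ‖x‖⁻¹ • x ∈ Metric.sphere (0 : E) 1 := by simp [norm_smul, hx']
  calc ⟪M u, u⟫ * ‖x‖ ^ 2 ≤ ⟪M (‖x‖⁻¹ • x), ‖x‖⁻¹ • x⟫ * ‖x‖ ^ 2 := by
        gcongr; exact hmin hv
    _ = ⟪M x, x⟫ := by
        rw [map_smul, real_inner_smul_left, real_inner_smul_right]
        field_simp

theorem lt_of_ne_of_gradient_eq_zero_imp_eq
    {E : Type*} [NormedAddCommGroup E] [InnerProductSpace ℝ E] [CompleteSpace E]
    {c : E → ℝ} {x₀ : E} (hmax : ∀ x, c x ≤ c x₀) (hcrit : ∀ x, gradient c x = 0 → x = x₀)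
    {x : E} (hx : x ≠ x₀) : c x < c x₀ := by
  refine (hmax x).lt_of_ne fun hcx => hx (hcrit x ?_)
  have hloc : IsLocalMax c x := Eventually.of_forall fun y => hcx ▸ hmax y
  simp [gradient, hloc.fderiv_eq_zero]

theorem HasGradientAt.hasDerivAt_comp
    {E : Type*} [NormedAddCommGroup E] [InnerProductSpace ℝ E] [CompleteSpace E]
    {f : E → ℝ} {g v : E} {p : ℝ → E} {t : ℝ}
    (hf : HasGradientAt f g (p t)) (hp : HasDerivAt p v t) :
    HasDerivAt (fun s => f (p s)) ⟪g, v⟫ t := by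
  simpa only [InnerProductSpace.toDual_apply_apply, Function.comp_def] using
    hf.hasFDerivAt.comp_hasDerivAt t hp

theorem isCompact_setOf_le_of_tendsto_cocompact_atBot {X : Type*} [TopologicalSpace X]
    {c : X → ℝ} (hc : Continuous c) (hcoc : Tendsto c (cocompact X) atBot) (a : ℝ) :
    IsCompact {x | a ≤ c x} := by
  obtain ⟨K, hK, hKc⟩ := mem_cocompact.1 (hcoc (Iio_mem_atBot a))
  exact hK.of_isClosed_subset (isClosed_le continuous_const hc)
    fun x (hx : a ≤ c x) => by_contra fun hxK => (hKc hxK : c x < a).not_ge hx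

theorem comap_nhds_le_nhds_of_tendsto_cocompact_atBot {X : Type*} [TopologicalSpace X]
    {c : X → ℝ} {x₀ : X} (hc : Continuous c) (hcoc : Tendsto c (cocompact X) atBot)
    (hmax : ∀ x, x ≠ x₀ → c x < c x₀) : comap c (𝓝 (c x₀)) ≤ 𝓝 x₀ := by
  have hK := isCompact_setOf_le_of_tendsto_cocompact_atBot hc hcoc (c x₀ - 1)
  refine hK.le_nhds_of_unique_clusterPt (preimage_mem_comap (Ici_mem_nhds (sub_one_lt _)))
    fun y _ hy => ?_
  have : NeBot (𝓝 y ⊓ comap c (𝓝 (c x₀))) := hy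
  have hcy : c y = c x₀ := tendsto_nhds_unique ((hc.tendsto y).mono_left inf_le_left)
    (tendsto_comap.mono_left inf_le_right)
  by_contra hne
  exact (hmax y hne).ne hcy

theorem exists_pos_setOf_le_subset_ball {X : Type*} [PseudoMetricSpace X]
    {c : X → ℝ} {x₀ : X} (hc : ContinuousAt c x₀) (hmax : ∀ x, c x ≤ c x₀)
    (hnear : comap c (𝓝 (c x₀)) ≤ 𝓝 x₀) {ε : ℝ} (hε : 0 < ε) :
    ∃ δ > 0, ∀ x, dist x x₀ < δ → {y | c x ≤ c y} ⊆ Metric.ball x₀ ε := by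
  obtain ⟨u, hu, hsub⟩ := hnear (Metric.ball_mem_nhds x₀ hε)
  obtain ⟨η, hη, hball⟩ := Metric.mem_nhds_iff.1 hu
  obtain ⟨δ, hδ, hδη⟩ := Metric.continuousAt_iff.1 hc η hη
  refine ⟨δ, hδ, fun x hx y (hxy : c x ≤ c y) => hsub (hball ?_)⟩
  have hcx := hδη hx
  rw [Metric.mem_ball, Real.dist_eq, abs_lt] at *
  constructor <;> linarith [hmax y]

theorem le_mul_exp_of_hasDerivAt_le_mul {f f' : ℝ → ℝ} {K : ℝ}
    (hf : ∀ t, HasDerivAt f (f' t) t) (hbound : ∀ t, f' t ≤ K * f t) {t : ℝ} (ht : 0 ≤ t) :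
    f t ≤ f 0 * exp (K * t) := by
  have := le_gronwallBound_of_liminf_deriv_right_le (b := t) (ε := 0)
    (fun x _ => (hf x).continuousAt.continuousWithinAt)
    (fun x _ r hr => (hf x).hasDerivWithinAt.liminf_right_slope_le hr) le_rfl
    (fun x _ => by simpa using hbound x) t ⟨ht, le_rfl⟩
  simpa [gronwallBound_ε0] using this

section GradientLikeFlow

variable {E : Type*} [NormedAddCommGroup E] [InnerProductSpace ℝ E] [CompleteSpace E]
  {c : E → ℝ} {M : E →L[ℝ] E} {p : ℝ → E}

theorem monotone_comp_of_gradient_flow (hc : Differentiable ℝ c) (hM : ∀ x, 0 ≤ ⟪M x, x⟫)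
    (hp : ∀ t, HasDerivAt p (M (gradient c (p t))) t) : Monotone fun t => c (p t) :=
  monotone_of_hasDerivAt_nonneg (fun t => (hc (p t)).hasGradientAt.hasDerivAt_comp (hp t))
    fun t => by rw [real_inner_comm]; exact hM _

theorem sub_le_mul_exp_of_gradient_flow {x₀ : E} {κ m : ℝ} (hc : Differentiable ℝ c)
    (hκ : 0 < κ) (hgap : ∀ x, c x₀ - c x ≤ κ * ‖gradient c x‖ ^ 2)
    (hm0 : 0 < m) (hm : ∀ x, m * ‖x‖ ^ 2 ≤ ⟪M x, x⟫)
    (hp : ∀ t, HasDerivAt p (M (gradient c (p t))) t) {t : ℝ} (ht : 0 ≤ t) :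
    c x₀ - c (p t) ≤ (c x₀ - c (p 0)) * exp (-(m / κ) * t) := by
  refine le_mul_exp_of_hasDerivAt_le_mul
    (fun s => ((hc (p s)).hasGradientAt.hasDerivAt_comp (hp s)).const_sub (c x₀))
    (fun s => ?_) ht
  set g := gradient c (p s)
  calc -⟪g, M g⟫ ≤ -(m * ‖g‖ ^ 2) := by rw [real_inner_comm]; linarith [hm g]
    _ = -(m / κ) * (κ * ‖g‖ ^ 2) := by field_simp
    _ ≤ -(m / κ) * (c x₀ - c (p s)) :=
        mul_le_mul_of_nonpos_left (hgap (p s)) (by linarith [div_pos hm0 hκ])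

theorem tendsto_comp_of_gradient_flow {x₀ : E} {κ m : ℝ} (hc : Differentiable ℝ c)
    (hmax : ∀ x, c x ≤ c x₀) (hκ : 0 < κ) (hgap : ∀ x, c x₀ - c x ≤ κ * ‖gradient c x‖ ^ 2)
    (hm0 : 0 < m) (hm : ∀ x, m * ‖x‖ ^ 2 ≤ ⟪M x, x⟫)
    (hp : ∀ t, HasDerivAt p (M (gradient c (p t))) t) :
    Tendsto (fun t => c (p t)) atTop (𝓝 (c x₀)) := by
  have hexp : Tendsto (fun t => (c x₀ - c (p 0)) * exp (-(m / κ) * t)) atTop (𝓝 0) := by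
    simpa [neg_mul] using (tendsto_exp_neg_atTop_nhds_zero.comp
      (tendsto_id.const_mul_atTop (div_pos hm0 hκ))).const_mul (c x₀ - c (p 0))
  have hgap_tendsto : Tendsto (fun t => c x₀ - c (p t)) atTop (𝓝 0) :=
    squeeze_zero' (Eventually.of_forall fun t => sub_nonneg.2 (hmax _))
      ((eventually_ge_atTop 0).mono fun _ =>
        sub_le_mul_exp_of_gradient_flow hc hκ hgap hm0 hm hp) hexp
  simpa using hgap_tendsto.const_sub (c x₀)

end GradientLikeFlow

theorem gradient_flow_GAS_general {n : ℕ} (c : EuclideanSpace ℝ (Fin n) → ℝ)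
    (pstar : EuclideanSpace ℝ (Fin n)) (κ : ℝ) (hκ : 0 < κ)
    (hc : ContDiff ℝ 1 c)
    (hrad : Tendsto c (Bornology.cobounded _) atBot)
    (hcrit : ∀ p, gradient c p = 0 ↔ p = pstar)
    (hmax : ∀ p, c p ≤ c pstar)
    (hineq : ∀ p, c p - c pstar ≥ -κ * ‖gradient c p‖ ^ 2)
    (M : EuclideanSpace ℝ (Fin n) →L[ℝ] EuclideanSpace ℝ (Fin n))
    (hMpos : ∀ x, x ≠ 0 → 0 < ⟪M x, x⟫) :
    (∀ ε > 0, ∃ δ > 0, ∀ p : ℝ → EuclideanSpace ℝ (Fin n),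
      (∀ t, HasDerivAt p (M (gradient c (p t))) t) →
      ‖p 0 - pstar‖ < δ → ∀ t ≥ (0:ℝ), ‖p t - pstar‖ < ε) ∧
    (∀ p : ℝ → EuclideanSpace ℝ (Fin n),
      (∀ t, HasDerivAt p (M (gradient c (p t))) t) →
      Tendsto p atTop (nhds pstar)) := by
  have hdiff : Differentiable ℝ c := hc.differentiable one_ne_zero
  obtain ⟨m, hm0, hm⟩ := M.exists_pos_mul_sq_norm_le_inner_self hMpos
  have hnear : comap c (𝓝 (c pstar)) ≤ 𝓝 pstar :=
    comap_nhds_le_nhds_of_tendsto_cocompact_atBot hc.continuous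
      (Metric.cobounded_eq_cocompact (α := EuclideanSpace ℝ (Fin n)) ▸ hrad)
      fun _ => lt_of_ne_of_gradient_eq_zero_imp_eq hmax fun y => (hcrit y).1
  refine ⟨fun ε hε => ?_, fun p hp => ?_⟩
  · obtain ⟨δ, hδ, hball⟩ :=
      exists_pos_setOf_le_subset_ball hc.continuous.continuousAt hmax hnear hε
    refine ⟨δ, hδ, fun p hp hp0 t ht => ?_⟩
    have hmono := monotone_comp_of_gradient_flow hdiff
      (fun x => (hm x).trans' (by positivity)) hp ht
    simpa [dist_eq_norm] using hball (p 0) (by rwa [dist_eq_norm]) hmono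
  · have hval := tendsto_comp_of_gradient_flow hdiff hmax hκ
      (fun x => by linarith [hineq x]) hm0 hm hp
    exact (tendsto_comap_iff.2 hval).mono_right hnear

/-- Global asymptotic stability of the unique maximizer `p*` for the gradient-like system
`ṗ = M ∇c(p)`, where `M` is symmetric positive definite, `c` is `C¹`, radially unbounded,
with unique critical point `p*` (the global maximum), satisfying
`c(p) − c(p*) ≥ −κ‖∇c(p)‖²`. Stability plus global attractivity. -/
theorem gradient_flow_GAS {n : ℕ} (c : EuclideanSpace ℝ (Fin n) → ℝ)
    (pstar : EuclideanSpace ℝ (Fin n)) (κ : ℝ) (hκ : 0 < κ)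
    (hc : ContDiff ℝ 1 c)
    (hrad : Tendsto c (Bornology.cobounded _) atBot)
    (hcrit : ∀ p, gradient c p = 0 ↔ p = pstar)
    (hmax : ∀ p, c p ≤ c pstar)
    (hineq : ∀ p, c p - c pstar ≥ -κ * ‖gradient c p‖ ^ 2)
    (M : EuclideanSpace ℝ (Fin n) →L[ℝ] EuclideanSpace ℝ (Fin n))
    (hMsym : ∀ x y, ⟪M x, y⟫ = ⟪x, M y⟫)
    (hMpos : ∀ x, x ≠ 0 → 0 < ⟪M x, x⟫) :
    (∀ ε > 0, ∃ δ > 0, ∀ p : ℝ → EuclideanSpace ℝ (Fin n),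
      (∀ t, HasDerivAt p (M (gradient c (p t))) t) →
      ‖p 0 - pstar‖ < δ → ∀ t ≥ (0:ℝ), ‖p t - pstar‖ < ε) ∧
    (∀ p : ℝ → EuclideanSpace ℝ (Fin n),
      (∀ t, HasDerivAt p (M (gradient c (p t))) t) →
      Tendsto p atTop (nhds pstar)) :=
  gradient_flow_GAS_general c pstar κ hκ hc hrad hcrit hmax hineq M hMpos
end

section
/- With f(z, τ) = √2·exp((τ − z)ê₃)·e₁ (i.e., the planar case σ = 0), the averaged quantity α_{ij} = (1/2π)∫₀^{2π} ( (∂f_i/∂z)·∫₀^τ f_j ds − (∫₀^τ (∂f_i/∂z) ds)·f_j ) dτ yields the 2×2 upper-left block of the matrix with α₁₁ = α₂₂ and α₁₂ = −α₂₁... specifically, the symmetric part of the matrix (α_{ij}) is positive semidefinite and nonzero. -/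
open Matrix Real

noncomputable section

/-- The hat map sending `Ω ∈ ℝ³` to the skew-symmetric matrix of the cross product with `Ω`. -/
def hat (v : Fin 3 → ℝ) : Matrix (Fin 3) (Fin 3) ℝ :=
  !![0, -v 2, v 1; v 2, 0, -v 0; -v 1, v 0, 0]

/-- Standard basis vectors of `ℝ³`. -/
def e (i : Fin 3) : Fin 3 → ℝ := Pi.single i 1

/-- The planar (σ = 0) oscillatory velocity field `f(z,τ) = √2·exp((τ−z)ê₃)·e₁`. -/
def fplanar (z τ : ℝ) : Fin 3 → ℝ :=
  Real.sqrt 2 • (NormedSpace.exp ((τ - z) • hat (e 2))).mulVec (e 0)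

/-- `∂f/∂z`, componentwise. -/
def fplanarz (z τ : ℝ) : Fin 3 → ℝ := fun i => deriv (fun z' => fplanar z' τ i) z

/-- The second-order averaging coefficients
`α_{ij} = (1/2π)∫₀^{2π} ( (∂f_i/∂z)·∫₀^τ f_j − (∫₀^τ ∂f_i/∂z)·f_j ) dτ`. -/
def alphaMat (z : ℝ) : Matrix (Fin 3) (Fin 3) ℝ :=
  Matrix.of fun i j =>
    (1/(2*π)) * ∫ τ in (0:ℝ)..(2*π),
      (fplanarz z τ i * ∫ s in (0:ℝ)..τ, fplanar z s j) -
        (∫ s in (0:ℝ)..τ, fplanarz z s i) * fplanar z τ j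


/-! `exp((τ − z)ê₃)` is the rotation by `τ − z` about `e₃`, so `f = √2 (cos(τ − z), sin(τ − z), 0)` and
`∂f/∂z = √2 (sin(τ − z), −cos(τ − z), 0)`. These satisfy `∂_τ (∂f/∂z) = f` and `∂_τ f = −∂f/∂z`, so
the inner integrals are `∂f/∂z(τ) − ∂f/∂z(0)` and `f(0) − f(τ)`. The integrand of `α_{ij}` then
becomes `(∂f_i/∂z ∂f_j/∂z + f_i f_j)(τ)`, which is the constant `2` on the first two diagonal
entries and `0` elsewhere, minus terms linear in `f(τ)` or `∂f/∂z(τ)`, which average to zero over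
a period. Hence `α = diag(2, 2, 0)`. -/

-- A continuous ring hom commutes with `exp`, and this one sends `(t i, 0)` to `t ê₃`.
def rotationBlockHom : ℂ × ℝ →+* Matrix (Fin 3) (Fin 3) ℝ where
  toFun p := !![p.1.re, -p.1.im, 0; p.1.im, p.1.re, 0; 0, 0, p.2]
  map_one' := by ext i j; fin_cases i <;> fin_cases j <;> simp
  map_mul' p q := by
    ext i j; fin_cases i <;> fin_cases j <;>
      simp [Matrix.mul_apply, Fin.sum_univ_three] <;> ring
  map_zero' := by ext i j; fin_cases i <;> fin_cases j <;> simp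
  map_add' p q := by ext i j; fin_cases i <;> fin_cases j <;> simp [add_comm]

lemma continuous_rotationBlockHom : Continuous rotationBlockHom := by
  refine continuous_matrix fun i j => ?_
  fin_cases i <;> fin_cases j <;> simp [rotationBlockHom] <;> fun_prop

section

attribute [local instance] Matrix.linftyOpNormedRing Matrix.linftyOpNormedAlgebra

lemma exp_smul_hat_e_two (t : ℝ) :
    NormedSpace.exp (t • hat (e 2)) = !![cos t, -sin t, 0; sin t, cos t, 0; 0, 0, 1] := by
  have hgen : t • hat (e 2) = rotationBlockHom (t * Complex.I, 0) := by
    ext i j; fin_cases i <;> fin_cases j <;> simp [rotationBlockHom, hat, e]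
  have hexp : NormedSpace.exp ((t : ℂ) * Complex.I, (0 : ℝ)) = (Complex.exp (t * Complex.I), 1) := by
    ext <;> simp [Complex.exp_eq_exp_ℂ]
  rw [hgen]
  refine (NormedSpace.map_exp rotationBlockHom continuous_rotationBlockHom _).symm.trans ?_
  rw [hexp]
  ext i j; fin_cases i <;> fin_cases j <;>
    simp [rotationBlockHom, Complex.exp_mul_I, ← Complex.ofReal_cos, ← Complex.ofReal_sin]

end

lemma fplanar_eq (z τ : ℝ) :
    fplanar z τ = ![√2 * cos (τ - z), √2 * sin (τ - z), 0] := by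
  rw [fplanar, exp_smul_hat_e_two]
  ext i; fin_cases i <;> simp [e]

lemma hasDerivAt_fplanar_apply_left (z τ : ℝ) (i : Fin 3) :
    HasDerivAt (fun z' => fplanar z' τ i)
      (![√2 * sin (τ - z), -(√2 * cos (τ - z)), 0] i) z := by
  have hsub : HasDerivAt (fun z' => τ - z') (-1) z := by
    simpa using (hasDerivAt_id z).const_sub τ
  simp only [fplanar_eq]
  fin_cases i
  · simpa using ((hasDerivAt_cos _).comp z hsub).const_mul √2
  · simpa using ((hasDerivAt_sin _).comp z hsub).const_mul √2
  · simpa using hasDerivAt_const z (0 : ℝ)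

lemma fplanarz_eq (z τ : ℝ) :
    fplanarz z τ = ![√2 * sin (τ - z), -(√2 * cos (τ - z)), 0] :=
  funext fun i => (hasDerivAt_fplanar_apply_left z τ i).deriv

lemma hasDerivAt_fplanar_apply (z τ : ℝ) (i : Fin 3) :
    HasDerivAt (fun t => fplanar z t i) (-fplanarz z τ i) τ := by
  have hsub : HasDerivAt (fun t => t - z) 1 τ := (hasDerivAt_id τ).sub_const z
  simp only [fplanar_eq, fplanarz_eq]
  fin_cases i
  · simpa using ((hasDerivAt_cos _).comp τ hsub).const_mul √2
  · simpa using ((hasDerivAt_sin _).comp τ hsub).const_mul √2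
  · simpa using hasDerivAt_const τ (0 : ℝ)

lemma hasDerivAt_fplanarz_apply (z τ : ℝ) (i : Fin 3) :
    HasDerivAt (fun t => fplanarz z t i) (fplanar z τ i) τ := by
  have hsub : HasDerivAt (fun t => t - z) 1 τ := (hasDerivAt_id τ).sub_const z
  simp only [fplanar_eq, fplanarz_eq]
  fin_cases i
  · simpa using ((hasDerivAt_sin _).comp τ hsub).const_mul √2
  · simpa using (((hasDerivAt_cos _).comp τ hsub).const_mul √2).fun_neg
  · simpa using hasDerivAt_const τ (0 : ℝ)

@[fun_prop]
lemma continuous_fplanar_apply (z : ℝ) (i : Fin 3) : Continuous fun t => fplanar z t i :=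
  continuous_iff_continuousAt.2 fun τ => (hasDerivAt_fplanar_apply z τ i).continuousAt

@[fun_prop]
lemma continuous_fplanarz_apply (z : ℝ) (i : Fin 3) : Continuous fun t => fplanarz z t i :=
  continuous_iff_continuousAt.2 fun τ => (hasDerivAt_fplanarz_apply z τ i).continuousAt

lemma integral_fplanar_apply (z τ : ℝ) (i : Fin 3) :
    ∫ s in (0 : ℝ)..τ, fplanar z s i = fplanarz z τ i - fplanarz z 0 i :=
  intervalIntegral.integral_eq_sub_of_hasDerivAt (fun t _ => hasDerivAt_fplanarz_apply z t i)
    ((continuous_fplanar_apply z i).intervalIntegrable _ _)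

lemma integral_fplanarz_apply (z τ : ℝ) (i : Fin 3) :
    ∫ s in (0 : ℝ)..τ, fplanarz z s i = fplanar z 0 i - fplanar z τ i := by
  have hF := intervalIntegral.integral_eq_sub_of_hasDerivAt
    (fun t _ => hasDerivAt_fplanar_apply z t i)
    ((continuous_fplanarz_apply z i).neg.intervalIntegrable 0 τ)
  rw [intervalIntegral.integral_neg] at hF
  linarith

lemma fplanar_two_pi (z : ℝ) : fplanar z (2 * π) = fplanar z 0 := by
  simp [fplanar_eq, sub_eq_neg_add, cos_add_two_pi, sin_add_two_pi]

lemma fplanarz_two_pi (z : ℝ) : fplanarz z (2 * π) = fplanarz z 0 := by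
  simp [fplanarz_eq, sub_eq_neg_add, cos_add_two_pi, sin_add_two_pi]

lemma integral_fplanar_apply_two_pi (z : ℝ) (i : Fin 3) :
    ∫ τ in (0 : ℝ)..(2 * π), fplanar z τ i = 0 := by
  rw [integral_fplanar_apply, fplanarz_two_pi, sub_self]

lemma integral_fplanarz_apply_two_pi (z : ℝ) (i : Fin 3) :
    ∫ τ in (0 : ℝ)..(2 * π), fplanarz z τ i = 0 := by
  rw [integral_fplanarz_apply, fplanar_two_pi, sub_self]

lemma fplanarz_mul_add_fplanar_mul (z τ : ℝ) (i j : Fin 3) :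
    fplanarz z τ i * fplanarz z τ j + fplanar z τ i * fplanar z τ j =
      diagonal ![2, 2, 0] i j := by
  have h2 : √2 * √2 = 2 := Real.mul_self_sqrt zero_le_two
  have h := sin_sq_add_cos_sq (τ - z)
  simp only [fplanar_eq, fplanarz_eq]
  fin_cases i <;> fin_cases j <;> simp [diagonal] <;> nlinarith

lemma alphaMat_eq (z : ℝ) : alphaMat z = diagonal ![2, 2, 0] := by
  ext i j
  set d := diagonal ![(2 : ℝ), 2, 0] i j
  have hintegrand (τ : ℝ) :
      (fplanarz z τ i * ∫ s in (0 : ℝ)..τ, fplanar z s j) -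
          (∫ s in (0 : ℝ)..τ, fplanarz z s i) * fplanar z τ j =
        d - fplanarz z τ i * fplanarz z 0 j - fplanar z 0 i * fplanar z τ j := by
    rw [integral_fplanar_apply, integral_fplanarz_apply]
    linear_combination fplanarz_mul_add_fplanar_mul z τ i j
  have hmean : ∫ τ in (0 : ℝ)..(2 * π),
      (d - fplanarz z τ i * fplanarz z 0 j - fplanar z 0 i * fplanar z τ j) = 2 * π * d := by
    rw [intervalIntegral.integral_sub, intervalIntegral.integral_sub,
      intervalIntegral.integral_const, intervalIntegral.integral_mul_const,
      intervalIntegral.integral_const_mul, integral_fplanarz_apply_two_pi,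
      integral_fplanar_apply_two_pi]
    · simp
    all_goals exact Continuous.intervalIntegrable (by fun_prop) _ _
  simp only [alphaMat, of_apply, hintegrand, hmean]
  field_simp

/-- The symmetric part of the averaged matrix `(α_{ij})` is positive semidefinite and nonzero. -/
theorem alphaMat_symm_posSemidef (z : ℝ) :
    (((1:ℝ)/2) • (alphaMat z + (alphaMat z)ᵀ)).PosSemidef ∧ alphaMat z ≠ 0 := by
  have hsymm : ((1 : ℝ) / 2) • (alphaMat z + (alphaMat z)ᵀ) = alphaMat z := by
    rw [alphaMat_eq, diagonal_transpose, ← two_smul ℝ, smul_smul]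
    norm_num
  rw [hsymm, alphaMat_eq, posSemidef_diagonal_iff, Ne, diagonal_eq_zero]
  refine ⟨fun i => ?_, fun h => ?_⟩
  · fin_cases i <;> norm_num
  · simpa using congrFun h 0
end
end
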